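/- arXiv:2007.14360 — 2 statements merged into one kernel-verified Lean document; each statement's English description precedes it below -/
import Mathlib

section
/- Suppose K and L are convolution kernels on ℤ, each a sum K = ∑_{s dyadic, s ≥ 𝒥} K_s and L = ∑_{s dyadic, s ≥ 𝒥} L_s of Calderón–Zygmund building blocks of scale s (each K_s, L_s supported in [-s,s], with vanishing sum, ∑|K_s|² ≤ D_K²/s, ∑|L_s|² ≤ D_L²/s, and the Hölder condition ∑_x |K_s(x+h) - K_s(x)|² ≤ (D_K²/s)(|h|/s)^ω, similarly for L). Then K * L is also a sum of CZ building blocks of scales ≥ 𝒥, and its CZ norm satisfies ‖K * L‖_CZ ≤ C ‖K‖_CZ ‖L‖_CZ with C independent of 𝒥. -/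
/-!
Write `K_{<N} = ∑_{m<N} K_m` and likewise for `L`. The block of `K * L` at scale `2^{p+1}` is
`P_{p+1} = K_{<p+1} * L_{<p+1} - K_{<p} * L_{<p} = K_p * L_{<p+1} + L_p * K_{<p}`, so the partial
sums of `∑ P_m` telescope to `K_{<N} * L_{<N}`, which tends to `K * L` because the `ℓ²` norms of the
blocks decay geometrically.

Each term `K_p * M` has support in `[-2^{p+1}, 2^{p+1}]` and vanishing mean, and by Parseval it
inherits the `ℓ²` and Hölder bounds of `K_p` up to the factor `sup |M̂|`. That a partial sum `M` of
blocks is a bounded Fourier multiplier, uniformly in the number of terms, follows from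
`|K̂_s(θ)| ≲ D min(s|θ|, (s|θ|)^{-ω/2})` for `|θ| ≤ π`: the first bound comes from the vanishing
mean, the second from the Hölder condition, and over dyadic `s` both sum geometrically.
-/

/-- Convolution on ℤ. -/
noncomputable def conv (f g : ℤ → ℂ) : ℤ → ℂ := fun x => ∑' y : ℤ, f (x - y) * g y

/-- A Calderón–Zygmund building block of scale `s` with constant `D` and Hölder
exponent `ω`: vanishing sum, support in `[-s, s]`, ℓ² bound and Hölder condition. -/
def IsCZBlock (ω : ℝ) (s : ℕ) (D : ℝ) (K : ℤ → ℂ) : Prop :=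
  (∑' x : ℤ, K x) = 0 ∧
  (∀ x : ℤ, (s : ℤ) < |x| → K x = 0) ∧
  (∑' x : ℤ, ‖K x‖ ^ 2) ≤ D ^ 2 / s ∧
  ∀ h : ℤ, (∑' x : ℤ, ‖K (x + h) - K x‖ ^ 2) ≤ D ^ 2 / s * (((|h| : ℤ) : ℝ) / s) ^ ω

open Finset MeasureTheory AddCircle
open scoped Real

noncomputable section

/-! ### Finitely supported kernels and convolution -/

def SupportedIn {E : Type*} [Zero E] (f : ℤ → E) (N : ℕ) : Prop :=
  ∀ x : ℤ, (N : ℤ) < |x| → f x = 0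

namespace SupportedIn

variable {E : Type*} {f g : ℤ → E} {N M : ℕ}

lemma eq_zero_of_notMem [Zero E] (hf : SupportedIn f N) {x : ℤ}
    (hx : x ∉ Icc (-(N : ℤ)) N) : f x = 0 :=
  hf x (by rwa [mem_Icc, ← abs_le, not_le] at hx)

lemma imp {F : Type*} [Zero E] [Zero F] {g : ℤ → F} (hf : SupportedIn f N)
    (h : ∀ x, f x = 0 → g x = 0) : SupportedIn g N :=
  fun x hx => h x (hf x hx)

lemma mono [Zero E] (hf : SupportedIn f N) (h : N ≤ M) : SupportedIn f M :=
  fun x hx => hf x (lt_of_le_of_lt (by exact_mod_cast h) hx)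

lemma summable [AddCommMonoid E] [TopologicalSpace E] (hf : SupportedIn f N) : Summable f :=
  summable_of_ne_finset_zero fun _ => hf.eq_zero_of_notMem

lemma tsum_eq [AddCommMonoid E] [TopologicalSpace E] [T2Space E] (hf : SupportedIn f N) :
    ∑' x, f x = ∑ x ∈ Icc (-(N : ℤ)) N, f x :=
  tsum_eq_sum fun _ => hf.eq_zero_of_notMem

lemma add [AddZeroClass E] (hf : SupportedIn f N) (hg : SupportedIn g N) :
    SupportedIn (f + g) N :=
  fun x hx => by simp [hf x hx, hg x hx]

lemma sub [AddGroup E] (hf : SupportedIn f N) (hg : SupportedIn g N) :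
    SupportedIn (f - g) N :=
  fun x hx => by simp [hf x hx, hg x hx]

lemma sum [AddCommMonoid E] {ι : Type*} {s : Finset ι} {f : ι → ℤ → E}
    (hf : ∀ i ∈ s, SupportedIn (f i) N) : SupportedIn (∑ i ∈ s, f i) N :=
  fun x hx => by simp [Finset.sum_apply, Finset.sum_eq_zero fun i hi => hf i hi x hx]

lemma comp_add_right [Zero E] (hf : SupportedIn f N) (h : ℤ) :
    SupportedIn (fun x => f (x + h)) (N + h.natAbs) :=
  fun x hx => hf _ (by
    have := abs_add_le (x + h) (-h)
    rw [add_neg_cancel_right, abs_neg] at this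
    push_cast at hx
    omega)

lemma norm_sq [SeminormedAddGroup E] (hf : SupportedIn f N) :
    SupportedIn (fun x => ‖f x‖ ^ 2) N :=
  hf.imp fun x hx => by simp [hx]

end SupportedIn

lemma card_Icc_neg_self (N : ℕ) : #(Icc (-(N : ℤ)) N) = 2 * N + 1 := by
  rw [Int.card_Icc]; omega

lemma SupportedIn.sq_tsum_norm_le {f : ℤ → ℂ} {N : ℕ} (hf : SupportedIn f N) :
    (∑' x, ‖f x‖) ^ 2 ≤ (2 * N + 1) * ∑' x, ‖f x‖ ^ 2 := by
  rw [(hf.imp fun x hx => by simp [hx]).tsum_eq, hf.norm_sq.tsum_eq]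
  have := sq_sum_le_card_mul_sum_sq (s := Icc (-(N : ℤ)) N) (f := fun x => ‖f x‖)
  rwa [card_Icc_neg_self, Nat.cast_add, Nat.cast_mul, Nat.cast_ofNat, Nat.cast_one] at this

lemma conv_eq_sum {g : ℤ → ℂ} {M : ℕ} (hg : SupportedIn g M) (f : ℤ → ℂ) (x : ℤ) :
    conv f g x = ∑ y ∈ Icc (-(M : ℤ)) M, f (x - y) * g y :=
  tsum_eq_sum fun _ hy => by rw [hg.eq_zero_of_notMem hy, mul_zero]

@[simp] lemma zero_conv (g : ℤ → ℂ) : conv 0 g = 0 := by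
  ext x
  simp [conv]

lemma conv_comm (f g : ℤ → ℂ) : conv f g = conv g f := by
  ext x
  rw [conv, conv, ← (Equiv.subLeft x).tsum_eq]
  simp [mul_comm]

lemma SupportedIn.conv {f g : ℤ → ℂ} {N M : ℕ} (hf : SupportedIn f N) (hg : SupportedIn g M) :
    SupportedIn (conv f g) (N + M) := by
  intro x hx
  rw [conv_eq_sum hg]
  refine Finset.sum_eq_zero fun y hy => ?_
  rw [mem_Icc, ← abs_le] at hy
  rw [hf _ (by have := abs_sub_abs_le_abs_sub x y; push_cast at hx; omega), zero_mul]

lemma conv_add_left {g : ℤ → ℂ} {M : ℕ} (hg : SupportedIn g M) (f₁ f₂ : ℤ → ℂ) :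
    conv (f₁ + f₂) g = conv f₁ g + conv f₂ g := by
  ext x
  simp only [Pi.add_apply, conv_eq_sum hg, add_mul, sum_add_distrib]

lemma conv_add_right {g₁ g₂ : ℤ → ℂ} {M : ℕ} (hg₁ : SupportedIn g₁ M) (hg₂ : SupportedIn g₂ M)
    (f : ℤ → ℂ) : conv f (g₁ + g₂) = conv f g₁ + conv f g₂ := by
  ext x
  simp only [Pi.add_apply, conv_eq_sum (hg₁.add hg₂), conv_eq_sum hg₁, conv_eq_sum hg₂, mul_add,
    sum_add_distrib]

lemma conv_sum_left {ι : Type*} {s : Finset ι} {g : ℤ → ℂ} {M : ℕ} (hg : SupportedIn g M)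
    (f : ι → ℤ → ℂ) : conv (∑ i ∈ s, f i) g = ∑ i ∈ s, conv (f i) g := by
  ext x
  simp only [Finset.sum_apply, conv_eq_sum hg, sum_mul]
  exact sum_comm

lemma conv_sum_right {ι : Type*} {s : Finset ι} {g : ι → ℤ → ℂ} {M : ℕ}
    (hg : ∀ i ∈ s, SupportedIn (g i) M) (f : ℤ → ℂ) :
    conv f (∑ i ∈ s, g i) = ∑ i ∈ s, conv f (g i) := by
  ext x
  rw [Finset.sum_apply, conv_eq_sum (SupportedIn.sum hg),
    sum_congr rfl fun i hi => conv_eq_sum (hg i hi) f x]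
  simp only [Finset.sum_apply, mul_sum]
  exact sum_comm

lemma conv_sub_shift {g : ℤ → ℂ} {M : ℕ} (hg : SupportedIn g M) (f : ℤ → ℂ) (h x : ℤ) :
    conv f g (x + h) - conv f g x = conv (fun t => f (t + h) - f t) g x := by
  simp only [conv_eq_sum hg, ← sum_sub_distrib, sub_mul, sub_add_eq_add_sub]


/-! ### Fourier series and Parseval -/

local instance : Fact (0 < 2 * π) := ⟨Real.two_pi_pos⟩

def fourierSum (f : ℤ → ℂ) (t : AddCircle (2 * π)) : ℂ := ∑' n, f n * fourier n t

lemma fourier_coe_two_pi (n : ℤ) (θ : ℝ) :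
    fourier n (θ : AddCircle (2 * π)) = Complex.exp (n * θ * Complex.I) := by
  rw [fourier_coe_apply]
  congr 1
  push_cast
  field_simp

lemma norm_fourier_coe_sub_one_le (n : ℤ) (θ : ℝ) :
    ‖fourier n (θ : AddCircle (2 * π)) - 1‖ ≤ |n * θ| := by
  have := Real.norm_exp_I_mul_ofReal_sub_one_le (x := n * θ)
  push_cast at this
  rwa [fourier_coe_two_pi, mul_comm]

lemma SupportedIn.mul_fourier {f : ℤ → ℂ} {N : ℕ} (hf : SupportedIn f N) (t : AddCircle (2 * π)) :
    SupportedIn (fun n => f n * fourier n t) N :=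
  hf.imp fun n hn => by simp [hn]

lemma fourierSum_zero (f : ℤ → ℂ) : fourierSum f 0 = ∑' n, f n := by
  simp [fourierSum]

lemma norm_fourierSum_le_tsum_norm {f : ℤ → ℂ} {N : ℕ} (hf : SupportedIn f N)
    (t : AddCircle (2 * π)) :
    ‖fourierSum f t‖ ≤ ∑' n, ‖f n‖ := by
  refine (norm_tsum_le_tsum_norm (hf.mul_fourier t).summable.norm).trans_eq ?_
  simp only [norm_mul, fourier_apply, Circle.norm_coe, mul_one]

lemma fourierSum_sum {ι : Type*} {s : Finset ι} {f : ι → ℤ → ℂ} {N : ι → ℕ}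
    (hf : ∀ i ∈ s, SupportedIn (f i) (N i)) (t : AddCircle (2 * π)) :
    fourierSum (∑ i ∈ s, f i) t = ∑ i ∈ s, fourierSum (f i) t := by
  simp only [fourierSum, Finset.sum_apply, sum_mul]
  exact Summable.tsum_finsetSum fun i hi => ((hf i hi).mul_fourier t).summable

lemma fourierSum_shift (f : ℤ → ℂ) (h : ℤ) (t : AddCircle (2 * π)) :
    fourierSum (fun x => f (x + h)) t = fourier (-h) t * fourierSum f t := by
  rw [fourierSum, ← (Equiv.subRight h).tsum_eq, fourierSum, ← tsum_mul_left]
  refine tsum_congr fun n => ?_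
  simp only [Equiv.subRight_apply, sub_add_cancel]
  rw [sub_eq_add_neg, fourier_add]
  ring

lemma fourierSum_sub_shift {f : ℤ → ℂ} {N : ℕ} (hf : SupportedIn f N) (h : ℤ)
    (t : AddCircle (2 * π)) :
    fourierSum (fun x => f (x + h) - f x) t = (fourier (-h) t - 1) * fourierSum f t := by
  rw [sub_one_mul, ← fourierSum_shift, fourierSum, fourierSum, fourierSum,
    ← Summable.tsum_sub ((hf.comp_add_right h).mul_fourier t).summable (hf.mul_fourier t).summable]
  simp only [sub_mul]

lemma fourierSum_conv {f g : ℤ → ℂ} {N M : ℕ} (hf : SupportedIn f N) (hg : SupportedIn g M)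
    (t : AddCircle (2 * π)) : fourierSum (conv f g) t = fourierSum f t * fourierSum g t := by
  have hshift : ∀ y ∈ Icc (-(M : ℤ)) M,
      ∑ x ∈ Icc (-((N + M : ℕ) : ℤ)) (N + M : ℕ), f (x - y) * fourier x t
        = fourier y t * fourierSum f t := by
    intro y hy
    rw [mem_Icc, ← abs_le, ← Int.natCast_natAbs, Nat.cast_le] at hy
    have hfy : SupportedIn (fun x => f (x + -y)) (N + M) :=
      (hf.comp_add_right (-y)).mono (by rw [Int.natAbs_neg]; omega)
    rw [← neg_neg y, ← fourierSum_shift, neg_neg, fourierSum, (hfy.mul_fourier t).tsum_eq]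
    simp only [sub_eq_add_neg]
  rw [fourierSum, ((hf.conv hg).mul_fourier t).tsum_eq,
    show fourierSum g t = _ from (hg.mul_fourier t).tsum_eq, mul_sum]
  simp only [conv_eq_sum hg, sum_mul]
  rw [sum_comm]
  refine sum_congr rfl fun y hy => ?_
  rw [show fourierSum f t * (g y * fourier y t) = (fourier y t * fourierSum f t) * g y by ring,
    ← hshift y hy, sum_mul]
  exact sum_congr rfl fun x _ => by ring

def trigPoly (f : ℤ → ℂ) (N : ℕ) : C(AddCircle (2 * π), ℂ) :=
  ∑ n ∈ Icc (-(N : ℤ)) N, f n • fourier n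

lemma trigPoly_apply {f : ℤ → ℂ} {N : ℕ} (hf : SupportedIn f N) (t : AddCircle (2 * π)) :
    trigPoly f N t = fourierSum f t := by
  simp [trigPoly, fourierSum, (hf.mul_fourier t).tsum_eq, -fourier_apply]

lemma fourierCoeff_trigPoly {f : ℤ → ℂ} {N : ℕ} (hf : SupportedIn f N) (n : ℤ) :
    fourierCoeff (trigPoly f N) n = f n := by
  rw [trigPoly, ContinuousMap.coe_sum, fourierCoeff.sum _ _ fun i _ =>
    (ContinuousMap.continuous _).integrable_of_hasCompactSupport (.of_compactSpace _)]
  simp only [ContinuousMap.coe_smul, fourierCoeff.const_smul, fourierCoeff_fourier,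
    Finset.sum_apply, Pi.single_apply, smul_eq_mul, mul_ite, mul_one, mul_zero, sum_ite_eq,
    ite_eq_left_iff]
  exact fun hn => (hf.eq_zero_of_notMem hn).symm

lemma SupportedIn.tsum_sq_norm_eq_integral {f : ℤ → ℂ} {N : ℕ} (hf : SupportedIn f N) :
    ∑' n, ‖f n‖ ^ 2 = ∫ t, ‖fourierSum f t‖ ^ 2 ∂haarAddCircle := by
  have h := tsum_sq_fourierCoeff ((trigPoly f N).toLp 2 haarAddCircle ℂ)
  simp only [fourierCoeff_toLp, fourierCoeff_trigPoly hf] at h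
  rw [h]
  refine integral_congr_ae ?_
  filter_upwards [ContinuousMap.coeFn_toLp (𝕜 := ℂ) (p := 2) (μ := haarAddCircle) (trigPoly f N)]
    with t ht
  rw [ht, trigPoly_apply hf]

theorem tsum_sq_norm_conv_le {f g : ℤ → ℂ} {N M : ℕ} (hf : SupportedIn f N)
    (hg : SupportedIn g M) {B : ℝ} (hB : ∀ t, ‖fourierSum g t‖ ≤ B) :
    ∑' x, ‖conv f g x‖ ^ 2 ≤ B ^ 2 * ∑' x, ‖f x‖ ^ 2 := by
  have hcont : ∀ {u : ℤ → ℂ} {K : ℕ}, SupportedIn u K →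
      Integrable (fun t => ‖fourierSum u t‖ ^ 2) haarAddCircle := fun hu => by
    simp_rw [← trigPoly_apply hu]
    exact (by fun_prop : Continuous _).integrable_of_hasCompactSupport (.of_compactSpace _)
  rw [(hf.conv hg).tsum_sq_norm_eq_integral, hf.tsum_sq_norm_eq_integral, ← integral_const_mul]
  refine integral_mono (hcont (hf.conv hg)) ((hcont hf).const_mul _) fun t => ?_
  rw [fourierSum_conv hf hg, norm_mul, mul_pow, mul_comm (B ^ 2)]
  gcongr
  exact hB t

/-! ### Fourier decay of a single block -/

lemma two_le_norm_exp_mul_I_sub_one_sq {α : ℝ} (h₁ : π / 2 ≤ |α|) (h₂ : |α| ≤ π + π / 2) :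
    2 ≤ ‖Complex.exp (α * Complex.I) - 1‖ ^ 2 := by
  have hcos : Real.cos α ≤ 0 := Real.cos_abs α ▸ Real.cos_nonpos_of_pi_div_two_le_of_le h₁ h₂
  have hhalf := Real.cos_sq (α / 2)
  rw [mul_comm, Complex.norm_exp_I_mul_ofReal_sub_one, Real.norm_eq_abs, sq_abs,
    mul_pow, Real.sin_sq, hhalf, mul_div_cancel₀ _ two_ne_zero]
  linarith

lemma exists_nat_mul_mem_Icc {θ : ℝ} (h₀ : θ ≠ 0) (hθ : |θ| ≤ π) :
    ∃ h : ℕ, h * |θ| ∈ Set.Icc (π / 2) (π + π / 2) := by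
  have hθ₀ : 0 < |θ| := abs_pos.2 h₀
  refine ⟨⌈π / 2 / |θ|⌉₊, ?_, ?_⟩
  · exact (div_le_iff₀ hθ₀).1 (Nat.le_ceil _)
  · have := Nat.ceil_lt_add_one (by positivity : 0 ≤ π / 2 / |θ|)
    have := (mul_lt_mul_of_pos_right this hθ₀).le
    rw [add_mul, div_mul_cancel₀ _ hθ₀.ne', one_mul] at this
    linarith

namespace IsCZBlock

variable {ω : ℝ} {s : ℕ} {D : ℝ} {K : ℤ → ℂ}

lemma supportedIn (hK : IsCZBlock ω s D K) : SupportedIn K s := hK.2.1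

lemma tsum_norm_le (hK : IsCZBlock ω s D K) (hD : 0 ≤ D) : ∑' x, ‖K x‖ ≤ 2 * D := by
  refine (pow_le_pow_iff_left₀ (tsum_nonneg fun _ => norm_nonneg _) (by positivity)
    two_ne_zero).1 (hK.supportedIn.sq_tsum_norm_le.trans ?_)
  have hl2 := hK.2.2.1
  rcases Nat.eq_zero_or_pos s with rfl | hs
  · simp only [CharP.cast_eq_zero, div_zero] at hl2
    nlinarith
  · have hs' : (1 : ℝ) ≤ s := by exact_mod_cast hs
    calc (2 * (s : ℝ) + 1) * ∑' x, ‖K x‖ ^ 2 ≤ (2 * s + 1) * (D ^ 2 / s) := by gcongr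
      _ = (2 + 1 / s) * D ^ 2 := by field_simp
      _ ≤ (2 * D) ^ 2 := by
        have : 1 / (s : ℝ) ≤ 1 := by rw [div_le_one (by positivity)]; exact hs'
        nlinarith [sq_nonneg D]

/-- The vanishing mean makes the Fourier series vanish to first order at `0`. -/
lemma norm_fourierSum_coe_le (hK : IsCZBlock ω s D K) (hD : 0 ≤ D) (θ : ℝ) :
    ‖fourierSum K θ‖ ≤ 2 * D * (s * |θ|) := by
  have hsupp := hK.supportedIn
  have hmean : ∑ y ∈ Icc (-(s : ℤ)) s, K y = 0 := hsupp.tsum_eq ▸ hK.1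
  have hrepr : fourierSum K θ
      = ∑ y ∈ Icc (-(s : ℤ)) s, K y * (fourier y (θ : AddCircle (2 * π)) - 1) := by
    simp only [fourierSum, (hsupp.mul_fourier _).tsum_eq, mul_sub, mul_one, sum_sub_distrib, hmean,
      sub_zero]
  calc ‖fourierSum K θ‖ ≤ ∑ y ∈ Icc (-(s : ℤ)) s, ‖K y‖ * (s * |θ|) := by
        rw [hrepr]
        refine norm_sum_le_of_le _ fun y hy => ?_
        rw [norm_mul]
        gcongr
        refine (norm_fourier_coe_sub_one_le y θ).trans ?_
        rw [abs_mul]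
        gcongr
        rw [mem_Icc, ← abs_le] at hy
        exact_mod_cast hy
    _ = (∑' y, ‖K y‖) * (s * |θ|) := by
        rw [← sum_mul, (hsupp.imp fun y hy => by simp [hy]).tsum_eq]
    _ ≤ 2 * D * (s * |θ|) := by gcongr; exact hK.tsum_norm_le hD

lemma norm_fourier_sub_one_mul_fourierSum_sq_le (hK : IsCZBlock ω s D K) (h : ℕ)
    (t : AddCircle (2 * π)) :
    ‖(fourier (-(h : ℤ)) t - 1) * fourierSum K t‖ ^ 2
      ≤ (2 * (s + h) + 1) * (D ^ 2 / s * (h / s) ^ ω) := by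
  have hΔ : SupportedIn (fun y => K (y + h) - K y) (s + h) := by
    have := hK.supportedIn.comp_add_right (h : ℤ)
    rw [Int.natAbs_natCast] at this
    exact this.sub (hK.supportedIn.mono (by omega))
  rw [← fourierSum_sub_shift hK.supportedIn]
  calc _ ≤ (∑' y, ‖K (y + h) - K y‖) ^ 2 := by
        gcongr
        exact norm_fourierSum_le_tsum_norm hΔ t
    _ ≤ (2 * ((s + h : ℕ) : ℝ) + 1) * ∑' y, ‖K (y + h) - K y‖ ^ 2 := hΔ.sq_tsum_norm_le
    _ ≤ _ := by
        push_cast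
        gcongr
        simpa using hK.2.2.2 h

/-- Shift by `h ≈ π / (2 |θ|)`: then `|e^{-ihθ} - 1| ≥ √2`, and the Hölder condition makes
the Fourier series of `K (· + h) - K` small. -/
lemma norm_fourierSum_coe_le_rpow (hK : IsCZBlock ω s D K) (hD : 0 ≤ D) (hω : 0 ≤ ω) {θ : ℝ}
    (hθ : |θ| ≤ π) (hsθ : 1 ≤ s * |θ|) :
    ‖fourierSum K θ‖ ≤ 3 * D * (5 / (s * |θ|)) ^ (ω / 2) := by
  set x := (s : ℝ) * |θ| with hx
  have hθ₀ : θ ≠ 0 := by rintro rfl; norm_num [hx] at hsθ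
  have hs : (1 : ℝ) ≤ s := by
    exact_mod_cast Nat.one_le_iff_ne_zero.2 fun h => by norm_num [hx, h] at hsθ
  obtain ⟨h, hh₁, hh₂⟩ := exists_nat_mul_mem_Icc hθ₀ hθ
  have hh₅ : (h : ℝ) * |θ| ≤ 5 := hh₂.trans (by linarith [Real.pi_lt_d2])
  have hhx : (h : ℝ) / s ≤ 5 / x := by
    rw [div_le_div_iff₀ (by positivity) (by positivity), hx]
    nlinarith
  have hhs : (h : ℝ) ≤ 5 * s := by
    have := (div_le_div_iff₀ (by positivity) (by positivity)).1 hhx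
    nlinarith
  have hfactor : 2 ≤ ‖fourier (-(h : ℤ)) (θ : AddCircle (2 * π)) - 1‖ ^ 2 := by
    rw [fourier_coe_two_pi]
    convert two_le_norm_exp_mul_I_sub_one_sq (α := -(h * θ)) ?_ ?_ using 4
    · push_cast; ring_nf
    all_goals rw [abs_neg, abs_mul, Nat.abs_cast]; assumption
  have hkey : 2 * ‖fourierSum K θ‖ ^ 2 ≤ 13 * D ^ 2 * (5 / x) ^ ω :=
    calc 2 * ‖fourierSum K θ‖ ^ 2
        ≤ ‖(fourier (-(h : ℤ)) (θ : AddCircle (2 * π)) - 1) * fourierSum K θ‖ ^ 2 := by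
          rw [norm_mul, mul_pow]
          gcongr
      _ ≤ (2 * (s + h) + 1) * (D ^ 2 / s * (h / s) ^ ω) :=
          hK.norm_fourier_sub_one_mul_fourierSum_sq_le h θ
      _ ≤ 13 * s * (D ^ 2 / s * (5 / x) ^ ω) := by gcongr; linarith
      _ = 13 * D ^ 2 * (5 / x) ^ ω := by field_simp
  have hsq : (5 / x) ^ ω = ((5 / x) ^ (ω / 2)) ^ 2 := by
    rw [← Real.rpow_natCast, ← Real.rpow_mul (by positivity)]
    norm_num
  refine (pow_le_pow_iff_left₀ (norm_nonneg _) (by positivity) two_ne_zero).1 ?_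
  rw [mul_pow, mul_pow, ← hsq]
  nlinarith [Real.rpow_nonneg (by positivity : 0 ≤ 5 / x) ω, sq_nonneg D]

lemma norm_fourierSum_coe_le_min (hK : IsCZBlock ω s D K) (hD : 0 ≤ D) (hω : 0 ≤ ω) {θ : ℝ}
    (hθ : |θ| ≤ π) :
    ‖fourierSum K θ‖ ≤ 3 * 5 ^ (ω / 2) * D * min (s * |θ|) ((s * |θ|) ^ (-(ω / 2))) := by
  set x := (s : ℝ) * |θ|
  have hx : 0 ≤ x := by positivity
  have h5 : (1 : ℝ) ≤ 5 ^ (ω / 2) := Real.one_le_rpow (by norm_num) (by positivity)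
  rcases le_total x 1 with hx1 | hx1
  · have hmin : min x (x ^ (-(ω / 2))) = x := by
      refine min_eq_left ?_
      rcases hx.eq_or_lt with hx0 | hx0
      · rw [← hx0]; exact Real.rpow_nonneg le_rfl _
      · exact hx1.trans (Real.one_le_rpow_of_pos_of_le_one_of_nonpos hx0 hx1 (by linarith))
    rw [hmin]
    refine (hK.norm_fourierSum_coe_le hD θ).trans ?_
    nlinarith [mul_nonneg hD hx]
  · have hmin : min x (x ^ (-(ω / 2))) = x ^ (-(ω / 2)) :=
      min_eq_right ((Real.rpow_le_one_of_one_le_of_nonpos hx1 (by linarith)).trans hx1)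
    rw [hmin]
    refine (hK.norm_fourierSum_coe_le_rpow hD hω hθ hx1).trans_eq ?_
    rw [Real.div_rpow (by norm_num) hx, Real.rpow_neg hx]
    ring

end IsCZBlock

lemma sum_le_inv_one_sub_of_le_pow {S : Finset ℕ} {f : ℕ → ℝ} {ρ : ℝ} (hρ₀ : 0 ≤ ρ) (hρ₁ : ρ < 1)
    (k : ℕ → ℕ) (hk : Set.InjOn k S) (hf : ∀ n ∈ S, f n ≤ ρ ^ k n) :
    ∑ n ∈ S, f n ≤ (1 - ρ)⁻¹ :=
  calc ∑ n ∈ S, f n ≤ ∑ n ∈ S, ρ ^ k n := sum_le_sum hf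
    _ = ∑ m ∈ S.image k, ρ ^ m := (sum_image hk).symm
    _ ≤ ∑' m, ρ ^ m :=
        Summable.sum_le_tsum _ (fun _ _ => by positivity) (summable_geometric_of_lt_one hρ₀ hρ₁)
    _ = (1 - ρ)⁻¹ := tsum_geometric_of_lt_one hρ₀ hρ₁

lemma sum_two_pow_mul_le {S : Finset ℕ} {r : ℝ} (hS : ∀ n ∈ S, 2 ^ n * r ≤ 1) :
    ∑ n ∈ S, 2 ^ n * r ≤ 2 := by
  rcases S.eq_empty_or_nonempty with rfl | hne
  · simp
  have hmax := hS _ (S.max'_mem hne)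
  calc ∑ n ∈ S, 2 ^ n * r ≤ (1 - 2⁻¹)⁻¹ := by
        refine sum_le_inv_one_sub_of_le_pow (by norm_num) (by norm_num) (S.max' hne - ·)
          (fun m hm n hn hmn => ?_) fun n hn => ?_
        · have := S.le_max' m hm
          have := S.le_max' n hn
          simp only at hmn
          omega
        · calc 2 ^ n * r = 2⁻¹ ^ (S.max' hne - n) * (2 ^ S.max' hne * r) := by
                rw [← Nat.sub_add_cancel (S.le_max' n hn), pow_add, Nat.add_sub_cancel, inv_pow]
                field_simp
            _ ≤ 2⁻¹ ^ (S.max' hne - n) := mul_le_of_le_one_right (by positivity) hmax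
    _ = 2 := by norm_num

lemma sum_rpow_neg_two_pow_mul_le {a : ℝ} (ha : 0 < a) {S : Finset ℕ} {r : ℝ}
    (hS : ∀ n ∈ S, 1 ≤ 2 ^ n * r) : ∑ n ∈ S, (2 ^ n * r) ^ (-a) ≤ (1 - 2 ^ (-a))⁻¹ := by
  have hρ : (2 : ℝ) ^ (-a) < 1 := Real.rpow_lt_one_of_one_lt_of_neg (by norm_num) (by linarith)
  rcases S.eq_empty_or_nonempty with rfl | hne
  · simpa using (inv_pos.2 (sub_pos.2 hρ)).le
  have hmin := hS _ (S.min'_mem hne)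
  refine sum_le_inv_one_sub_of_le_pow (by positivity) hρ (· - S.min' hne)
    (fun m hm n hn hmn => ?_) fun n hn => ?_
  · have := S.min'_le m hm
    have := S.min'_le n hn
    simp only at hmn
    omega
  · have hsplit : 2 ^ n * r = 2 ^ (n - S.min' hne) * (2 ^ S.min' hne * r) := by
      rw [← mul_assoc, ← pow_add, Nat.sub_add_cancel (S.min'_le n hn)]
    rw [hsplit, ← Real.rpow_mul_natCast (by norm_num), mul_comm (-a),
      Real.rpow_natCast_mul (by norm_num)]
    exact Real.rpow_le_rpow_of_nonpos (by positivity) (le_mul_of_one_le_right (by positivity) hmin)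
      (by linarith)

/-- On either side of the scale where `2 ^ n * r ≈ 1` the terms decay geometrically. -/
lemma sum_min_two_pow_mul_le {a : ℝ} (ha : 0 < a) (r : ℝ) (S : Finset ℕ) :
    ∑ n ∈ S, min (2 ^ n * r) ((2 ^ n * r) ^ (-a)) ≤ 2 + (1 - 2 ^ (-a))⁻¹ := by
  rw [← sum_filter_add_sum_filter_not S (fun n => 2 ^ n * r ≤ 1)]
  gcongr ?_ + ?_
  · exact (sum_le_sum fun n _ => min_le_left _ _).trans
      (sum_two_pow_mul_le fun n hn => (mem_filter.1 hn).2)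
  · exact (sum_le_sum fun n _ => min_le_right _ _).trans
      (sum_rpow_neg_two_pow_mul_le ha fun n hn => (not_le.1 (mem_filter.1 hn).2).le)

lemma AddCircle.exists_abs_le_half_period_coe_eq {T : ℝ} [Fact (0 < T)] (t : AddCircle T) :
    ∃ θ : ℝ, |θ| ≤ T / 2 ∧ (θ : AddCircle T) = t := by
  have hmem := (equivIco T (-(T / 2)) t).2
  refine ⟨_, abs_le.2 ⟨hmem.1, ?_⟩, coe_equivIco⟩
  linarith [hmem.2]

def dyadicMultiplierConst (ω : ℝ) : ℝ := 3 * 5 ^ (ω / 2) * (2 + (1 - 2 ^ (-(ω / 2)))⁻¹)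

theorem norm_fourierSum_sum_le {ω D : ℝ} (hω : 0 < ω) (hD : 0 ≤ D) {L : ℕ → ℤ → ℂ}
    {S : Finset ℕ} (hL : ∀ n ∈ S, IsCZBlock ω (2 ^ n) D (L n)) (t : AddCircle (2 * π)) :
    ‖fourierSum (∑ n ∈ S, L n) t‖ ≤ dyadicMultiplierConst ω * D := by
  obtain ⟨θ, hθ, rfl⟩ := AddCircle.exists_abs_le_half_period_coe_eq t
  rw [mul_div_cancel_left₀ _ two_ne_zero] at hθ
  rw [fourierSum_sum fun n hn => (hL n hn).supportedIn]
  calc ‖∑ n ∈ S, fourierSum (L n) θ‖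
      ≤ ∑ n ∈ S, 3 * 5 ^ (ω / 2) * D * min (2 ^ n * |θ|) ((2 ^ n * |θ|) ^ (-(ω / 2))) := by
        refine norm_sum_le_of_le _ fun n hn => ?_
        simpa using (hL n hn).norm_fourierSum_coe_le_min hD hω.le hθ
    _ = 3 * 5 ^ (ω / 2) * D * ∑ n ∈ S, min (2 ^ n * |θ|) ((2 ^ n * |θ|) ^ (-(ω / 2))) := by
        rw [mul_sum]
    _ ≤ dyadicMultiplierConst ω * D := by
        rw [dyadicMultiplierConst, mul_right_comm]
        gcongr
        exact sum_min_two_pow_mul_le (by positivity) _ S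

/-! ### Operations on blocks -/

lemma SupportedIn.tsum_sq_norm_add_le {f g : ℤ → ℂ} {N : ℕ} (hf : SupportedIn f N)
    (hg : SupportedIn g N) :
    ∑' x, ‖f x + g x‖ ^ 2 ≤ 2 * (∑' x, ‖f x‖ ^ 2 + ∑' x, ‖g x‖ ^ 2) := by
  rw [← Summable.tsum_add hf.norm_sq.summable hg.norm_sq.summable, ← tsum_mul_left]
  refine Summable.tsum_le_tsum (fun x => ?_) (hf.add hg).norm_sq.summable
    ((hf.norm_sq.summable.add hg.norm_sq.summable).mul_left 2)
  exact (pow_le_pow_left₀ (norm_nonneg _) (norm_add_le _ _) 2).trans add_sq_le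

namespace IsCZBlock

variable {ω : ℝ} {s : ℕ} {D : ℝ} {K : ℤ → ℂ}

protected lemma zero : IsCZBlock ω s D 0 :=
  ⟨by simp, fun _ _ => rfl, by simp; positivity, fun h => by simp; positivity⟩

protected lemma add {K' : ℤ → ℂ} (hK : IsCZBlock ω s D K) (hK' : IsCZBlock ω s D K') :
    IsCZBlock ω s (2 * D) (K + K') := by
  have hsupp := hK.supportedIn
  have hsupp' := hK'.supportedIn
  refine ⟨?_, hsupp.add hsupp', ?_, fun h => ?_⟩
  · rw [Pi.add_def, Summable.tsum_add hsupp.summable hsupp'.summable, hK.1, hK'.1, add_zero]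
  · refine (hsupp.tsum_sq_norm_add_le hsupp').trans ?_
    rw [show (2 * D) ^ 2 / s = 2 * (D ^ 2 / s + D ^ 2 / s) by ring]
    gcongr
    exacts [hK.2.2.1, hK'.2.2.1]
  · have hΔ : ∀ {f : ℤ → ℂ}, SupportedIn f s →
        SupportedIn (fun x => f (x + h) - f x) (s + h.natAbs) :=
      fun hf => (hf.comp_add_right h).sub (hf.mono (by omega))
    calc ∑' x, ‖(K + K') (x + h) - (K + K') x‖ ^ 2
        = ∑' x, ‖(K (x + h) - K x) + (K' (x + h) - K' x)‖ ^ 2 := by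
          simp only [Pi.add_apply, add_sub_add_comm]
      _ ≤ 2 * (∑' x, ‖K (x + h) - K x‖ ^ 2 + ∑' x, ‖K' (x + h) - K' x‖ ^ 2) :=
          (hΔ hsupp).tsum_sq_norm_add_le (hΔ hsupp')
      _ ≤ (2 * D) ^ 2 / s * (((|h| : ℤ) : ℝ) / s) ^ ω := by
          rw [show ∀ X : ℝ, (2 * D) ^ 2 / s * X = 2 * (D ^ 2 / s * X + D ^ 2 / s * X) by
            intro X; ring]
          gcongr
          exacts [hK.2.2.2 h, hK'.2.2.2 h]

protected lemma conv (hK : IsCZBlock ω s D K) (hω : 0 ≤ ω) {M : ℤ → ℂ} (hM : SupportedIn M s)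
    {B : ℝ} (hB : ∀ t, ‖fourierSum M t‖ ≤ B) :
    IsCZBlock ω (2 * s) (2 ^ ((1 + ω) / 2) * B * D) (conv K M) := by
  have hsupp := hK.supportedIn
  have hconst :
      (2 ^ ((1 + ω) / 2) * B * D) ^ 2 / ((2 * s : ℕ) : ℝ) = 2 ^ ω * (B ^ 2 * (D ^ 2 / s)) := by
    rw [mul_pow, mul_pow, ← Real.rpow_natCast, ← Real.rpow_mul (by norm_num), Nat.cast_ofNat,
      div_mul_cancel₀ _ two_ne_zero, Real.rpow_add (by norm_num), Real.rpow_one]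
    push_cast
    rcases eq_or_ne (s : ℝ) 0 with hs | hs
    · simp [hs]
    · field_simp
  refine ⟨?_, two_mul s ▸ hsupp.conv hM, ?_, fun h => ?_⟩
  · rw [← fourierSum_zero, fourierSum_conv hsupp hM, fourierSum_zero, hK.1, zero_mul]
  · rw [hconst]
    calc ∑' x, ‖conv K M x‖ ^ 2 ≤ B ^ 2 * ∑' x, ‖K x‖ ^ 2 := tsum_sq_norm_conv_le hsupp hM hB
      _ ≤ B ^ 2 * (D ^ 2 / s) := by gcongr; exact hK.2.2.1
      _ ≤ 2 ^ ω * (B ^ 2 * (D ^ 2 / s)) :=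
          le_mul_of_one_le_left (by positivity) (Real.one_le_rpow (by norm_num) hω)
  · have hrescale :
        (((|h| : ℤ) : ℝ) / s) ^ ω = 2 ^ ω * (((|h| : ℤ) : ℝ) / ((2 * s : ℕ) : ℝ)) ^ ω := by
      rw [← Real.mul_rpow (by norm_num) (by positivity)]
      congr 1
      push_cast
      rcases eq_or_ne (s : ℝ) 0 with hs | hs
      · simp [hs]
      · field_simp
    calc ∑' x, ‖conv K M (x + h) - conv K M x‖ ^ 2
        = ∑' x, ‖conv (fun y => K (y + h) - K y) M x‖ ^ 2 := by
          simp only [conv_sub_shift hM]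
      _ ≤ B ^ 2 * ∑' x, ‖K (x + h) - K x‖ ^ 2 :=
          tsum_sq_norm_conv_le ((hsupp.comp_add_right h).sub (hsupp.mono (by omega))) hM hB
      _ ≤ B ^ 2 * (D ^ 2 / s * (((|h| : ℤ) : ℝ) / s) ^ ω) := by gcongr; exact hK.2.2.2 h
      _ = _ := by rw [hrescale, hconst]; ring

end IsCZBlock

/-! ### Convergence of the block decomposition -/

lemma SupportedIn.norm_le_sqrt_tsum {f : ℤ → ℂ} {N : ℕ} (hf : SupportedIn f N) (x : ℤ) :
    ‖f x‖ ≤ √(∑' y, ‖f y‖ ^ 2) :=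
  (Real.le_sqrt (norm_nonneg _) (tsum_nonneg fun _ => by positivity)).2
    (hf.norm_sq.summable.le_tsum x fun _ _ => by positivity)

lemma SupportedIn.tsum_norm_mul_le {f g : ℤ → ℂ} {N M : ℕ} (hf : SupportedIn f N)
    (hg : SupportedIn g M) (x : ℤ) :
    ∑' y, ‖f (x - y) * g y‖ ≤ √(∑' y, ‖f y‖ ^ 2) * √(∑' y, ‖g y‖ ^ 2) := by
  have hfx : Summable fun y => ‖f (x - y)‖ ^ 2 :=
    (Equiv.subLeft x).summable_iff.2 hf.norm_sq.summable
  rw [(hg.imp fun y hy => by simp [hy]).tsum_eq, hg.norm_sq.tsum_eq]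
  simp only [norm_mul]
  refine (Real.sum_mul_le_sqrt_mul_sqrt _ _ _).trans ?_
  gcongr
  calc ∑ y ∈ Icc (-(M : ℤ)) M, ‖f (x - y)‖ ^ 2 ≤ ∑' y, ‖f (x - y)‖ ^ 2 :=
        hfx.sum_le_tsum _ fun _ _ => by positivity
    _ = ∑' y, ‖f y‖ ^ 2 := (Equiv.subLeft x).tsum_eq (fun y => ‖f y‖ ^ 2)

theorem hasSum_conv_tsum {K L : ℕ → ℤ → ℂ} {NK NL : ℕ → ℕ} (hK : ∀ m, SupportedIn (K m) (NK m))
    (hL : ∀ n, SupportedIn (L n) (NL n)) (hKs : Summable fun m => √(∑' z, ‖K m z‖ ^ 2))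
    (hLs : Summable fun n => √(∑' z, ‖L n z‖ ^ 2)) (x : ℤ) :
    HasSum (fun mn : ℕ × ℕ => conv (K mn.1) (L mn.2) x)
      (conv (fun y => ∑' m, K m y) (fun y => ∑' n, L n y) x) := by
  set u : ℕ × ℕ → ℤ → ℂ := fun mn y => K mn.1 (x - y) * L mn.2 y
  have hab := hKs.mul_of_nonneg hLs (fun _ => Real.sqrt_nonneg _) (fun _ => Real.sqrt_nonneg _)
  have hu_row : ∀ mn, Summable fun y => ‖u mn y‖ := fun mn =>
    ((hL mn.2).imp fun y hy => by simp [u, hy]).summable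
  have hu_row_le : ∀ mn, ∑' y, ‖u mn y‖ ≤ √(∑' z, ‖K mn.1 z‖ ^ 2) * √(∑' z, ‖L mn.2 z‖ ^ 2) :=
    fun mn => (hK mn.1).tsum_norm_mul_le (hL mn.2) x
  have hu_le : ∀ mn y, ‖u mn y‖ ≤ √(∑' z, ‖K mn.1 z‖ ^ 2) * √(∑' z, ‖L mn.2 z‖ ^ 2) :=
    fun mn y => (norm_mul_le _ _).trans (mul_le_mul ((hK mn.1).norm_le_sqrt_tsum _)
      ((hL mn.2).norm_le_sqrt_tsum _) (norm_nonneg _) (Real.sqrt_nonneg _))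
  have hu : Summable (Function.uncurry u) := by
    refine Summable.of_norm ((summable_prod_of_nonneg fun _ => norm_nonneg _).2 ⟨hu_row, ?_⟩)
    exact Summable.of_nonneg_of_le (fun _ => tsum_nonneg fun _ => norm_nonneg _) hu_row_le hab
  have hG : Summable fun mn : ℕ × ℕ => conv (K mn.1) (L mn.2) x :=
    Summable.of_norm_bounded hab fun mn => (norm_tsum_le_tsum_norm (hu_row mn)).trans (hu_row_le mn)
  convert hG.hasSum using 1
  have hK_col : ∀ z, Summable fun m => ‖K m z‖ := fun z =>
    Summable.of_nonneg_of_le (fun _ => norm_nonneg _) (fun m => (hK m).norm_le_sqrt_tsum z) hKs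
  have hL_col : ∀ z, Summable fun n => ‖L n z‖ := fun z =>
    Summable.of_nonneg_of_le (fun _ => norm_nonneg _) (fun n => (hL n).norm_le_sqrt_tsum z) hLs
  calc conv (fun y => ∑' m, K m y) (fun y => ∑' n, L n y) x = ∑' y, ∑' mn, u mn y :=
        tsum_congr fun y => tsum_mul_tsum_of_summable_norm (hK_col _) (hL_col _)
    _ = ∑' mn, ∑' y, u mn y :=
        hu.tsum_comm' (fun mn => (hu_row mn).of_norm)
          (fun y => Summable.of_norm_bounded hab fun mn => hu_le mn y)
    _ = ∑' mn : ℕ × ℕ, conv (K mn.1) (L mn.2) x := rfl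

lemma IsCZBlock.sqrt_tsum_sq_norm_le {ω D : ℝ} {m : ℕ} {K : ℤ → ℂ}
    (hK : IsCZBlock ω (2 ^ m) D K) (hD : 0 ≤ D) :
    √(∑' x, ‖K x‖ ^ 2) ≤ D * (√2)⁻¹ ^ m := by
  rw [Real.sqrt_le_left (by positivity), mul_pow, ← pow_mul, mul_comm m, pow_mul, inv_pow,
    Real.sq_sqrt zero_le_two, inv_pow, ← div_eq_mul_inv]
  exact_mod_cast hK.2.2.1

lemma summable_sqrt_tsum_sq_norm {ω D : ℝ} (hD : 0 ≤ D) {K : ℕ → ℤ → ℂ}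
    (hK : ∀ m, IsCZBlock ω (2 ^ m) D (K m)) :
    Summable fun m => √(∑' x, ‖K m x‖ ^ 2) :=
  Summable.of_nonneg_of_le (fun _ => Real.sqrt_nonneg _) (fun m => (hK m).sqrt_tsum_sq_norm_le hD)
    ((summable_geometric_of_lt_one (by positivity)
      (inv_lt_one_of_one_lt₀ (by simp [Real.lt_sqrt]))).mul_left D)

lemma supportedIn_sum_range {K : ℕ → ℤ → ℂ} (hK : ∀ m, SupportedIn (K m) (2 ^ m)) {N p : ℕ}
    (hN : N ≤ p + 1) : SupportedIn (∑ m ∈ range N, K m) (2 ^ p) :=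
  SupportedIn.sum fun m hm =>
    (hK m).mono (Nat.pow_le_pow_right two_pos (Nat.lt_succ_iff.1 ((mem_range.1 hm).trans_le hN)))

section Decomposition

variable (K L : ℕ → ℤ → ℂ)

def truncConv (N : ℕ) : ℤ → ℂ := conv (∑ m ∈ range N, K m) (∑ n ∈ range N, L n)

/-- `convBlocks K L (p + 1)` collects the products `K m * L n` with `max m n = p`. -/
def convBlocks : ℕ → ℤ → ℂ
  | 0 => 0
  | p + 1 => truncConv K L (p + 1) - truncConv K L p

variable {K L}

lemma truncConv_eq_zero {J N : ℕ} (hKJ : ∀ m, m < J → K m = 0) (hN : N ≤ J) :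
    truncConv K L N = 0 := by
  have : ∑ m ∈ range N, K m = 0 := sum_eq_zero fun m hm => hKJ m ((mem_range.1 hm).trans_le hN)
  rw [truncConv, this, zero_conv]

lemma convBlocks_eq_zero {J m : ℕ} (hKJ : ∀ m, m < J → K m = 0) (hm : m < J) :
    convBlocks K L m = 0 := by
  cases m with
  | zero => rfl
  | succ p =>
    simp [convBlocks, truncConv_eq_zero hKJ hm.le, truncConv_eq_zero hKJ (by omega : p ≤ J)]

lemma sum_range_succ_convBlocks (N : ℕ) :
    ∑ m ∈ range (N + 1), convBlocks K L m = truncConv K L N := by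
  rw [sum_range_succ']
  simp only [convBlocks, add_zero]
  rw [sum_range_sub (truncConv K L), show truncConv K L 0 = 0 by simp [truncConv], sub_zero]

lemma truncConv_succ_sub (hL : ∀ n, SupportedIn (L n) (2 ^ n)) (p : ℕ) :
    truncConv K L (p + 1) - truncConv K L p
      = conv (K p) (∑ n ∈ range (p + 1), L n) + conv (L p) (∑ m ∈ range p, K m) := by
  have hLp : SupportedIn (∑ n ∈ range (p + 1), L n) (2 ^ p) := supportedIn_sum_range hL le_rfl
  rw [truncConv, truncConv, sum_range_succ K, conv_add_left hLp, sum_range_succ L,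
    conv_add_right (supportedIn_sum_range hL (by omega)) (hL p), conv_comm _ (L p)]
  abel

lemma truncConv_apply (hL : ∀ n, SupportedIn (L n) (2 ^ n)) (N : ℕ) (x : ℤ) :
    truncConv K L N x = ∑ mn ∈ range N ×ˢ range N, conv (K mn.1) (L mn.2) x := by
  rw [truncConv, conv_sum_left (supportedIn_sum_range hL (Nat.le_succ N)), sum_product,
    Finset.sum_apply]
  refine sum_congr rfl fun m _ => ?_
  rw [conv_sum_right (M := 2 ^ N) fun n hn =>
      (hL n).mono (Nat.pow_le_pow_right two_pos (mem_range.1 hn).le),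
    Finset.sum_apply]

end Decomposition

def czConvConst (ω : ℝ) : ℝ := 2 * 2 ^ ((1 + ω) / 2) * dyadicMultiplierConst ω

lemma czConvConst_pos {ω : ℝ} (hω : 0 < ω) : 0 < czConvConst ω := by
  have : (2 : ℝ) ^ (-(ω / 2)) < 1 := Real.rpow_lt_one_of_one_lt_of_neg (by norm_num) (by linarith)
  have : 0 < (1 - (2 : ℝ) ^ (-(ω / 2)))⁻¹ := inv_pos.2 (by linarith)
  unfold czConvConst dyadicMultiplierConst
  positivity

section Blocks

variable {ω DK DL : ℝ} {K L : ℕ → ℤ → ℂ}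

theorem isCZBlock_convBlocks (hω : 0 < ω) (hDK : 0 ≤ DK) (hDL : 0 ≤ DL)
    (hK : ∀ m, IsCZBlock ω (2 ^ m) DK (K m)) (hL : ∀ n, IsCZBlock ω (2 ^ n) DL (L n)) (m : ℕ) :
    IsCZBlock ω (2 ^ m) (czConvConst ω * DK * DL) (convBlocks K L m) := by
  cases m with
  | zero => exact IsCZBlock.zero
  | succ p =>
    have hKL := (hK p).conv hω.le (supportedIn_sum_range (fun n => (hL n).supportedIn) le_rfl)
      (norm_fourierSum_sum_le hω hDL fun n _ => hL n)
    have hLK := (hL p).conv hω.le (supportedIn_sum_range (fun m => (hK m).supportedIn) p.le_succ)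
      (norm_fourierSum_sum_le hω hDK fun m _ => hK m)
    rw [show ∀ c : ℝ,
      c * (dyadicMultiplierConst ω * DK) * DL = c * (dyadicMultiplierConst ω * DL) * DK
      by intro c; ring] at hLK
    rw [convBlocks, truncConv_succ_sub fun n => (hL n).supportedIn, pow_succ']
    convert hKL.add hLK using 1
    unfold czConvConst
    ring

theorem hasSum_convBlocks (hω : 0 < ω) (hDK : 0 ≤ DK) (hDL : 0 ≤ DL)
    (hK : ∀ m, IsCZBlock ω (2 ^ m) DK (K m)) (hL : ∀ n, IsCZBlock ω (2 ^ n) DL (L n)) (x : ℤ) :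
    HasSum (fun m => convBlocks K L m x)
      (conv (fun y => ∑' m, K m y) (fun y => ∑' n, L n y) x) := by
  have hblocks := isCZBlock_convBlocks hω hDK hDL hK hL
  have hnorm : Summable fun m => ‖convBlocks K L m x‖ :=
    Summable.of_nonneg_of_le (fun _ => norm_nonneg _)
      (fun m => (hblocks m).supportedIn.norm_le_sqrt_tsum x)
      (summable_sqrt_tsum_sq_norm (by have := czConvConst_pos hω; positivity) hblocks)
  refine (hasSum_iff_tendsto_nat_of_summable_norm hnorm).2
    ((Filter.tendsto_add_atTop_iff_nat 1).1 ?_)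
  simp_rw [← Finset.sum_apply, sum_range_succ_convBlocks,
    truncConv_apply fun n => (hL n).supportedIn]
  refine (hasSum_conv_tsum (fun m => (hK m).supportedIn) (fun n => (hL n).supportedIn)
    (summable_sqrt_tsum_sq_norm hDK hK) (summable_sqrt_tsum_sq_norm hDL hL) x).comp ?_
  refine Filter.tendsto_atTop_finset_of_monotone
    (fun _ _ h => product_subset_product (range_mono h) (range_mono h))
    fun mn => ⟨max mn.1 mn.2 + 1, ?_⟩
  simp only [mem_product, mem_range]
  omega

end Blocks

/-- the convolution of two CZ kernels made of blocks of dyadic scales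
`≥ 2^J` is again such a CZ kernel, with `‖K * L‖_CZ ≤ C ‖K‖_CZ ‖L‖_CZ`,
`C` independent of `J`. -/
theorem stmt3 (ω : ℝ) (hω : 0 < ω) : ∃ C : ℝ, 0 < C ∧
    ∀ (J : ℕ) (DK DL : ℝ) (Kb Lb : ℕ → ℤ → ℂ),
    0 < DK → 0 < DL →
    (∀ m, m < J → Kb m = 0) → (∀ m, m < J → Lb m = 0) →
    (∀ m, IsCZBlock ω (2 ^ m) DK (Kb m)) →
    (∀ m, IsCZBlock ω (2 ^ m) DL (Lb m)) →
    ∃ Pb : ℕ → ℤ → ℂ,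
      (∀ m, m < J → Pb m = 0) ∧
      (∀ m, IsCZBlock ω (2 ^ m) (C * DK * DL) (Pb m)) ∧
      ∀ x : ℤ,
        conv (fun y => ∑' m : ℕ, Kb m y) (fun y => ∑' m : ℕ, Lb m y) x =
          ∑' m : ℕ, Pb m x := by
  refine ⟨czConvConst ω, czConvConst_pos hω, fun J DK DL Kb Lb hDK hDL hKJ _ hKb hLb => ?_⟩
  exact ⟨convBlocks Kb Lb, fun m hm => convBlocks_eq_zero hKJ hm,
    isCZBlock_convBlocks hω hDK.le hDL.le hKb hLb,
    fun x => (hasSum_convBlocks hω hDK.le hDL.le hKb hLb x).tsum_eq.symm⟩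
end
end

section
/- With the hypotheses of the previous smoothing estimate, the bilinear bound holds: ∑_{s dyadic, 2^k ≤ s ≤ M} |⟨ρ_{s,s} * B_k^{(s)}, B_k^{(s)}⟩| ≤ C λ ∑_{s dyadic, s ≥ 2^k} (2^k/s)^γ ‖B_k^{(s)}‖_{ℓ¹} ≤ C' λ ‖B_k‖_{ℓ¹}, where for each s, ρ_{s,s} satisfies |ρ_{s,s}(x+h) − ρ_{s,s}(x)| ≤ (C/s)(|h|/s)^γ and supp ρ_{s,s} ⊂ [−Cs, Cs], and B_k^{(s)} is a sum of mean-zero pieces supported on disjoint dyadic intervals of length 2^k with ℓ¹ norms ≤ Cλ2^k each, with ‖B_k^{(s)}‖_{ℓ¹} ≤ ‖B_k‖_{ℓ¹}. -/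
/-- ℓ² pairing `⟨f, g⟩ = ∑_x f(x) conj(g(x))`. -/
noncomputable def pairing (f g : ℤ → ℂ) : ℂ := ∑' x : ℤ, f x * (starRingEnd ℂ) (g x)

/-!
At scale `2^n`, every dyadic block of `B` of length `2^k` has mean zero, so against it
`ρ(x - ·)` can be replaced by its oscillation over the block, which the Hölder bound makes at
most `(C/2^n)(2^k/2^n)^γ`. Only `O(2^n/2^k)` blocks meet the support of `ρ(x - ·)`, each of ℓ¹
mass at most `Cλ2^k`, so `‖ρ * B‖_∞ ≲ λ (2^k/2^n)^γ`. Pairing against `B ∈ ℓ¹` and summing the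
geometric series `∑_{n ≥ k} (2^k/2^n)^γ = (1 - 2^{-γ})⁻¹` gives both bounds.
-/

open Finset

theorem Int.sum_Ico_mul_eq_sum_blocks {M : Type*} [AddCommMonoid M] (f : ℤ → M) {K : ℤ}
    (hK : 0 ≤ K) {a b : ℤ} (hab : a ≤ b) :
    ∑ y ∈ Ico (a * K) (b * K), f y =
      ∑ q ∈ Ico a b, ∑ y ∈ Ico (q * K) ((q + 1) * K), f y := by
  induction b, hab using Int.leInduction with
  | base => simp
  | succ b hab ih =>
    have hle : a * K ≤ b * K := mul_le_mul_of_nonneg_right hab hK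
    have hle' : b * K ≤ (b + 1) * K := mul_le_mul_of_nonneg_right (by omega) hK
    rw [← Ico_union_Ico_eq_Ico hle hle', sum_union (Ico_disjoint_Ico_consecutive _ _ _), ih,
      sum_Ico_add_eq_sum_Ico_add_one hab]

theorem norm_sum_mul_le_of_sum_eq_zero {ι 𝕜 : Type*} [SeminormedRing 𝕜] {s : Finset ι}
    {f B : ι → 𝕜} (c : 𝕜) {ε : ℝ} (hB : ∑ i ∈ s, B i = 0)
    (hf : ∀ i ∈ s, ‖f i - c‖ ≤ ε) :
    ‖∑ i ∈ s, f i * B i‖ ≤ ε * ∑ i ∈ s, ‖B i‖ := by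
  have hsub : ∑ i ∈ s, f i * B i = ∑ i ∈ s, (f i - c) * B i := by
    simp only [sub_mul, sum_sub_distrib, ← mul_sum, hB, mul_zero, sub_zero]
  rw [hsub, mul_sum]
  exact (norm_sum_le _ _).trans <| sum_le_sum fun i hi =>
    (norm_mul_le _ _).trans <| mul_le_mul_of_nonneg_right (hf i hi) (norm_nonneg _)

theorem norm_pairing_le {f g : ℤ → ℂ} {D : ℝ} (hf : ∀ x, ‖f x‖ ≤ D)
    (hg : Summable fun x => ‖g x‖) : ‖pairing f g‖ ≤ D * ∑' x, ‖g x‖ := by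
  have hle : ∀ x, ‖f x * (starRingEnd ℂ) (g x)‖ ≤ D * ‖g x‖ := fun x => by
    rw [norm_mul, RCLike.norm_conj]
    exact mul_le_mul_of_nonneg_right (hf x) (norm_nonneg _)
  have hsum := Summable.of_nonneg_of_le (fun _ => norm_nonneg _) hle (hg.mul_left D)
  calc ‖pairing f g‖ ≤ ∑' x, ‖f x * (starRingEnd ℂ) (g x)‖ :=
        norm_tsum_le_tsum_norm hsum
    _ ≤ ∑' x, D * ‖g x‖ := hsum.tsum_le_tsum hle (hg.mul_left D)
    _ = D * ∑' x, ‖g x‖ := tsum_mul_left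

theorem hasSum_ite_geometric_of_lt_one {r : ℝ} (hr0 : 0 ≤ r) (hr1 : r < 1) (k : ℕ) :
    HasSum (fun n => if k ≤ n then r ^ (n - k) else 0) (1 - r)⁻¹ := by
  rw [← hasSum_nat_add_iff' k, sum_eq_zero fun n hn => if_neg (by simpa using hn), sub_zero]
  simpa using hasSum_geometric_of_lt_one hr0 hr1

theorem two_pow_div_two_pow_rpow {γ : ℝ} {k n : ℕ} (hkn : k ≤ n) :
    ((2 : ℝ) ^ k / 2 ^ n) ^ γ = ((1 / 2 : ℝ) ^ γ) ^ (n - k) := by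
  rw [Real.rpow_pow_comm (by norm_num), ← pow_sub_mul_pow 2 hkn, div_pow, one_pow]
  field_simp

theorem norm_conv_le_of_blockwise_mean_zero {ρ B : ℤ → ℂ} {K : ℤ} (hK : 0 < K) {R : ℕ}
    {ε S : ℝ} (hosc : ∀ x h : ℤ, |h| ≤ K → ‖ρ (x + h) - ρ x‖ ≤ ε)
    (hsupp : ∀ x : ℤ, (R : ℤ) < |x| → ρ x = 0)
    (hmean : ∀ q : ℤ, ∑ y ∈ Ico (q * K) ((q + 1) * K), B y = 0)
    (hblock : ∀ q : ℤ, ∑ y ∈ Ico (q * K) ((q + 1) * K), ‖B y‖ ≤ S) (x : ℤ) :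
    ‖conv ρ B x‖ ≤ (2 * R / K + 3) * (ε * S) := by
  set L : ℤ := R / K + 1
  have hRL : (R : ℤ) < L * K := Int.lt_ediv_add_one_mul_self _ hK
  have hL : 0 ≤ L := by have := Int.ediv_nonneg (Nat.cast_nonneg R) hK.le; omega
  have hLR : 2 * (L : ℝ) + 1 ≤ 2 * R / K + 3 := by
    have h : ((R / K : ℤ) : ℝ) * K ≤ R := by exact_mod_cast Int.ediv_mul_le (R : ℤ) hK.ne'
    rw [← le_div_iff₀ (by exact_mod_cast hK)] at h
    simp only [L]; push_cast; linarith [mul_div_assoc (2 : ℝ) R K]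
  have hx := Int.ediv_mul_le x hK.ne'
  have hx' := Int.lt_ediv_add_one_mul_self x hK
  -- the window of `2L+1` blocks centred at the block containing `x` covers `x - supp ρ`
  have hwindow :
      conv ρ B x = ∑ y ∈ Ico ((x / K - L) * K) ((x / K + L + 1) * K), ρ (x - y) * B y := by
    refine tsum_eq_sum fun y hy => ?_
    rw [hsupp _ ?_, zero_mul]
    rw [mem_Ico, not_and_or, not_le, not_lt] at hy
    rw [lt_abs]
    rcases hy with hy | hy
    · left; nlinarith
    · right; nlinarith
  have hε : 0 ≤ ε := by simpa using hosc 0 0 (by simpa using hK.le)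
  have hS : 0 ≤ S := (sum_nonneg fun _ _ => norm_nonneg _).trans (hblock 0)
  have hblock_conv :
      ∀ q : ℤ, ‖∑ y ∈ Ico (q * K) ((q + 1) * K), ρ (x - y) * B y‖ ≤ ε * S := by
    intro q
    refine (norm_sum_mul_le_of_sum_eq_zero (ρ (x - q * K)) (hmean q) fun y hy => ?_).trans
      (mul_le_mul_of_nonneg_left (hblock q) hε)
    rw [mem_Ico] at hy
    have := hosc (x - q * K) (q * K - y) (by rw [abs_le]; constructor <;> nlinarith)
    rwa [sub_add_sub_cancel] at this
  rw [hwindow, Int.sum_Ico_mul_eq_sum_blocks _ hK.le (by omega)]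
  calc _ ≤ ∑ q ∈ Ico (x / K - L) (x / K + L + 1), ε * S :=
        (norm_sum_le _ _).trans (sum_le_sum fun q _ => hblock_conv q)
    _ = (2 * L + 1 : ℤ) * (ε * S) := by
        rw [sum_const, Int.card_Ico, nsmul_eq_mul,
          show x / K + L + 1 - (x / K - L) = 2 * L + 1 by ring]
        congr 1
        exact_mod_cast Int.toNat_of_nonneg (by omega)
    _ ≤ (2 * R / K + 3) * (ε * S) := by
        gcongr
        exact_mod_cast hLR

theorem norm_conv_le_of_dyadic_holder {C γ lam : ℝ} (hC : 0 ≤ C) (hγ : 0 ≤ γ)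
    (hlam : 0 ≤ lam) {k n : ℕ} (hkn : k ≤ n) {ρ B : ℤ → ℂ}
    (hρ : ∀ x h : ℤ,
      ‖ρ (x + h) - ρ x‖ ≤ C / 2 ^ n * (((|h| : ℤ) : ℝ) / 2 ^ n) ^ γ)
    (hsupp : ∀ x : ℤ, C * 2 ^ n < ((|x| : ℤ) : ℝ) → ρ x = 0)
    (hmean : ∀ q : ℤ, ∑ y ∈ Ico (q * 2 ^ k) ((q + 1) * 2 ^ k), B y = 0)
    (hblock : ∀ q : ℤ,
      ∑ y ∈ Ico (q * 2 ^ k) ((q + 1) * 2 ^ k), ‖B y‖ ≤ C * lam * 2 ^ k)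
    (x : ℤ) :
    ‖conv ρ B x‖ ≤ (2 * C + 5) * C ^ 2 * lam * ((2 : ℝ) ^ k / 2 ^ n) ^ γ := by
  obtain ⟨R, hCR, hRC⟩ : ∃ R : ℕ, C * 2 ^ n ≤ R ∧ (R : ℝ) < C * 2 ^ n + 1 :=
    ⟨_, Nat.le_ceil _, Nat.ceil_lt_add_one (by positivity)⟩
  have hosc : ∀ x h : ℤ, |h| ≤ 2 ^ k →
      ‖ρ (x + h) - ρ x‖ ≤ C / 2 ^ n * ((2 : ℝ) ^ k / 2 ^ n) ^ γ := fun x h hh =>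
    (hρ x h).trans (by gcongr; exact_mod_cast hh)
  have hsupp' : ∀ x : ℤ, (R : ℤ) < |x| → ρ x = 0 := fun x hx =>
    hsupp x (hCR.trans_lt (by exact_mod_cast hx))
  set t := ((2 : ℝ) ^ k / 2 ^ n) ^ γ
  have hkn' : (2 : ℝ) ^ k ≤ 2 ^ n := pow_le_pow_right₀ (by norm_num) hkn
  have hn : (1 : ℝ) ≤ 2 ^ n := one_le_pow₀ (by norm_num)
  refine (norm_conv_le_of_blockwise_mean_zero (by positivity) hosc hsupp' hmean hblock x).trans ?_
  calc (2 * R / ((2 ^ k : ℤ) : ℝ) + 3) * (C / 2 ^ n * t * (C * lam * 2 ^ k))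
      = (2 * R + 3 * 2 ^ k) * (C ^ 2 * lam * t) / 2 ^ n := by push_cast; field_simp
    _ ≤ (2 * C + 5) * 2 ^ n * (C ^ 2 * lam * t) / 2 ^ n := by gcongr; linarith
    _ = (2 * C + 5) * C ^ 2 * lam * t := by field_simp

theorem summable_and_tsum_le_of_dyadic_decay {γ : ℝ} (hγ : 0 < γ) (k : ℕ) {a : ℕ → ℝ}
    {A : ℝ} (ha0 : ∀ n, 0 ≤ a n) (haA : ∀ n, a n ≤ A) :
    Summable (fun n => if k ≤ n then ((2 : ℝ) ^ k / 2 ^ n) ^ γ * a n else 0) ∧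
      ∑' n, (if k ≤ n then ((2 : ℝ) ^ k / 2 ^ n) ^ γ * a n else 0) ≤
        A * (1 - (1 / 2 : ℝ) ^ γ)⁻¹ := by
  have hgeom := (hasSum_ite_geometric_of_lt_one (r := (1 / 2 : ℝ) ^ γ) (by positivity)
    (Real.rpow_lt_one (by norm_num) (by norm_num) hγ) k).mul_left A
  have hnonneg : ∀ n, 0 ≤ if k ≤ n then ((2 : ℝ) ^ k / 2 ^ n) ^ γ * a n else 0 := fun n => by
    split_ifs
    exacts [mul_nonneg (by positivity) (ha0 n), le_rfl]
  have hle : ∀ n, (if k ≤ n then ((2 : ℝ) ^ k / 2 ^ n) ^ γ * a n else 0) ≤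
      A * if k ≤ n then ((1 / 2 : ℝ) ^ γ) ^ (n - k) else 0 := fun n => by
    split_ifs with hkn
    · rw [two_pow_div_two_pow_rpow hkn, mul_comm A]
      exact mul_le_mul_of_nonneg_left (haA n) (by positivity)
    · rw [mul_zero]
  have hsum := Summable.of_nonneg_of_le hnonneg hle hgeom.summable
  exact ⟨hsum, (hsum.tsum_le_tsum hle hgeom.summable).trans_eq hgeom.tsum_eq⟩

/-- the bilinear bound
`∑_{s dyadic, 2^k ≤ s ≤ M} |⟨ρ_{s,s} * B_k^{(s)}, B_k^{(s)}⟩|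
  ≤ Cλ ∑_{s ≥ 2^k} (2^k/s)^γ ‖B_k^{(s)}‖₁ ≤ C'λ ‖B_k‖₁`. -/
theorem stmt16 (C γ : ℝ) (hC : 0 < C) (hγ : 0 < γ) : ∃ C' : ℝ, 0 < C' ∧
    ∀ (lam M : ℝ) (k : ℕ) (ρ : ℕ → ℤ → ℂ) (Bs : ℕ → ℤ → ℂ) (Bk : ℤ → ℂ),
    0 < lam → 1 ≤ M →
    (∀ n (x h : ℤ), ‖ρ n (x + h) - ρ n x‖ ≤ C / 2 ^ n * (((|h| : ℤ) : ℝ) / 2 ^ n) ^ γ) →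
    (∀ n (x : ℤ), C * 2 ^ n < ((|x| : ℤ) : ℝ) → ρ n x = 0) →
    (∀ n (q : ℤ), (∑ y ∈ Finset.Ico (q * 2 ^ k) ((q + 1) * 2 ^ k), Bs n y) = 0) →
    (∀ n (q : ℤ), (∑ y ∈ Finset.Ico (q * 2 ^ k) ((q + 1) * 2 ^ k), ‖Bs n y‖) ≤
      C * lam * 2 ^ k) →
    (∀ n, Summable fun x : ℤ => ‖Bs n x‖) →
    (Summable fun x : ℤ => ‖Bk x‖) →
    (∀ n, (∑' x : ℤ, ‖Bs n x‖) ≤ ∑' x : ℤ, ‖Bk x‖) →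
    (∑' n : ℕ, if (2 : ℝ) ^ k ≤ 2 ^ n ∧ ((2 : ℝ) ^ n ≤ M) then
          ‖pairing (conv (ρ n) (Bs n)) (Bs n)‖ else 0) ≤
        C' * lam * ∑' n : ℕ,
          (if k ≤ n then ((2 : ℝ) ^ k / 2 ^ n) ^ γ * ∑' x : ℤ, ‖Bs n x‖ else 0) ∧
      (∑' n : ℕ, if (2 : ℝ) ^ k ≤ 2 ^ n ∧ ((2 : ℝ) ^ n ≤ M) then
          ‖pairing (conv (ρ n) (Bs n)) (Bs n)‖ else 0) ≤
        C' * lam * ∑' x : ℤ, ‖Bk x‖ := by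
  set A := (2 * C + 5) * C ^ 2
  set r := (1 / 2 : ℝ) ^ γ
  have hr1 : r < 1 := Real.rpow_lt_one (by norm_num) (by norm_num) hγ
  have hr : 1 ≤ (1 - r)⁻¹ := (one_le_inv₀ (by linarith)).2 (sub_le_self _ (by positivity))
  refine ⟨A * (1 - r)⁻¹, mul_pos (by positivity) (one_pos.trans_le hr), ?_⟩
  intro lam M k ρ Bs Bk hlam _ hρ hsupp hmean hblock hsum _ hle
  obtain ⟨hg, hgBk⟩ := summable_and_tsum_le_of_dyadic_decay hγ k
    (fun n => tsum_nonneg fun x => norm_nonneg (Bs n x)) hle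
  set g := fun n => if k ≤ n then ((2 : ℝ) ^ k / 2 ^ n) ^ γ * ∑' x : ℤ, ‖Bs n x‖ else 0
  have hterm : ∀ n, (if (2 : ℝ) ^ k ≤ 2 ^ n ∧ ((2 : ℝ) ^ n ≤ M) then
      ‖pairing (conv (ρ n) (Bs n)) (Bs n)‖ else 0) ≤ A * lam * g n := by
    intro n
    by_cases hn : (2 : ℝ) ^ k ≤ 2 ^ n ∧ (2 : ℝ) ^ n ≤ M
    · have hkn : k ≤ n := (pow_le_pow_iff_right₀ one_lt_two).1 hn.1
      rw [if_pos hn, show g n = _ from if_pos hkn, ← mul_assoc]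
      exact norm_pairing_le (norm_conv_le_of_dyadic_holder hC.le hγ.le hlam.le hkn (hρ n)
        (hsupp n) (hmean n) (hblock n)) (hsum n)
    · rw [if_neg hn]
      exact mul_nonneg (by positivity) (by simp only [g]; split_ifs <;> positivity)
  have hmain := ((Summable.of_nonneg_of_le (fun n => by split_ifs <;> positivity) hterm
    (hg.mul_left _)).tsum_le_tsum hterm (hg.mul_left _)).trans_eq tsum_mul_left
  refine ⟨hmain.trans ?_, hmain.trans ?_⟩
  · calc A * lam * ∑' n, g n ≤ A * lam * (∑' n, g n) * (1 - r)⁻¹ :=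
          le_mul_of_one_le_right (by positivity) hr
      _ = _ := by ring
  · calc A * lam * ∑' n, g n ≤ A * lam * ((∑' x, ‖Bk x‖) * (1 - r)⁻¹) := by gcongr
      _ = _ := by ring
end
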